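/- arXiv:2508.02478 — 6 statements merged into one kernel-verified Lean document; each statement's English description precedes it below -/
import Mathlib

section
/- For any nonnegative random variable Z with E[Z] = 1, one has E[min(Z,1)] ≤ E[Z^{1/2}] ≤ √2 · (E[min(Z,1)])^{1/2}. -/
/-!
Pointwise, `min z 1 ≤ √z`, which gives the first inequality. For the second, factor
`√Z = √(min Z 1) · √(max Z 1)` and apply Cauchy–Schwarz; since `max Z 1 ≤ Z + 1`, the second
factor contributes at most `√(E[Z] + 1) = √2`.
-/

open MeasureTheory

namespace Real

theorem min_one_le_sqrt (x : ℝ) : min x 1 ≤ √x := by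
  rcases le_total x 1 with hx | hx
  · rw [min_eq_left hx]
    exact le_sqrt_self_iff.mpr hx
  · rw [min_eq_right hx]
    exact one_le_sqrt.mpr hx

theorem sqrt_le_max_one (x : ℝ) : √x ≤ max x 1 := by
  rcases le_total x 1 with hx | hx
  · exact (sqrt_le_one.mpr hx).trans (le_max_right x 1)
  · exact (sqrt_le_self_iff.mpr (Or.inr hx)).trans (le_max_left x 1)

theorem sqrt_min_one_mul_sqrt_max_one (x : ℝ) : √(min x 1) * √(max x 1) = √x := by
  rw [← sqrt_mul' _ (zero_le_one.trans (le_max_right x 1)), min_mul_max, mul_one]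

end Real

namespace MeasureTheory

variable {Ω : Type*} [MeasurableSpace Ω] {μ : Measure Ω} {f g : Ω → ℝ}

theorem Integrable.sqrt [IsFiniteMeasure μ] (hf : Integrable f μ) :
    Integrable (fun ω => √(f ω)) μ :=
  (show Integrable (fun ω => max (f ω) 1) μ from hf.sup (integrable_const 1)).mono'
    (Real.continuous_sqrt.comp_aestronglyMeasurable hf.aestronglyMeasurable)
    (ae_of_all _ fun ω => by
      simpa only [Real.norm_of_nonneg (Real.sqrt_nonneg _)] using Real.sqrt_le_max_one (f ω))

theorem memLp_two_sqrt (hf0 : 0 ≤ᵐ[μ] f) (hf : Integrable f μ) :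
    MemLp (fun ω => √(f ω)) 2 μ := by
  refine (memLp_two_iff_integrable_sq
    (Real.continuous_sqrt.comp_aestronglyMeasurable hf.aestronglyMeasurable)).mpr ?_
  refine hf.congr ?_
  filter_upwards [hf0] with ω hω
  exact (Real.sq_sqrt hω).symm

theorem integral_sqrt_mul_le (hf0 : 0 ≤ᵐ[μ] f) (hg0 : 0 ≤ᵐ[μ] g)
    (hf : Integrable f μ) (hg : Integrable g μ) :
    ∫ ω, √(f ω) * √(g ω) ∂μ ≤ √(∫ ω, f ω ∂μ) * √(∫ ω, g ω ∂μ) := by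
  have cauchy_schwarz := integral_mul_le_Lp_mul_Lq_of_nonneg Real.HolderConjugate.two_two
    (ae_of_all _ fun ω => Real.sqrt_nonneg (f ω)) (ae_of_all _ fun ω => Real.sqrt_nonneg (g ω))
    (by simpa using memLp_two_sqrt hf0 hf) (by simpa using memLp_two_sqrt hg0 hg)
  have hsq : ∀ {h : Ω → ℝ}, 0 ≤ᵐ[μ] h → ∫ ω, √(h ω) ^ (2 : ℝ) ∂μ = ∫ ω, h ω ∂μ := fun h0 =>
    integral_congr_ae (h0.mono fun ω hω => (Real.rpow_two _).trans (Real.sq_sqrt hω))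
  rwa [hsq hf0, hsq hg0, ← Real.sqrt_eq_rpow, ← Real.sqrt_eq_rpow] at cauchy_schwarz

end MeasureTheory

/-- For any nonnegative random variable `Z` with `E[Z] = 1`, one has
`E[min(Z,1)] ≤ E[Z^{1/2}] ≤ √2 · (E[min(Z,1)])^{1/2}`. -/
theorem stmt_0 {Ω : Type*} [MeasurableSpace Ω] (μ : Measure Ω) [IsProbabilityMeasure μ]
    (Z : Ω → ℝ) (hZpos : ∀ ω, 0 ≤ Z ω) (hZint : Integrable Z μ)
    (hmean : ∫ ω, Z ω ∂μ = 1) :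
    (∫ ω, min (Z ω) 1 ∂μ) ≤ ∫ ω, Real.sqrt (Z ω) ∂μ ∧
      (∫ ω, Real.sqrt (Z ω) ∂μ) ≤ Real.sqrt 2 * Real.sqrt (∫ ω, min (Z ω) 1 ∂μ) := by
  have hmin : Integrable (fun ω => min (Z ω) 1) μ := hZint.inf (integrable_const 1)
  have hmax : Integrable (fun ω => max (Z ω) 1) μ := hZint.sup (integrable_const 1)
  have hmax_le : ∫ ω, max (Z ω) 1 ∂μ ≤ 2 := by
    calc ∫ ω, max (Z ω) 1 ∂μ ≤ ∫ ω, (Z ω + 1) ∂μ :=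
          integral_mono hmax (hZint.add (integrable_const 1))
            fun ω => max_le (by linarith [hZpos ω]) (by linarith [hZpos ω])
      _ = 2 := by rw [integral_add hZint (integrable_const 1), hmean]; norm_num
  refine ⟨integral_mono hmin hZint.sqrt fun ω => Real.min_one_le_sqrt (Z ω), ?_⟩
  calc ∫ ω, √(Z ω) ∂μ = ∫ ω, √(min (Z ω) 1) * √(max (Z ω) 1) ∂μ := by
        simp only [Real.sqrt_min_one_mul_sqrt_max_one]
    _ ≤ √(∫ ω, min (Z ω) 1 ∂μ) * √(∫ ω, max (Z ω) 1 ∂μ) :=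
        integral_sqrt_mul_le (ae_of_all _ fun ω => le_min (hZpos ω) zero_le_one)
          (ae_of_all _ fun ω => zero_le_one.trans (le_max_right _ _)) hmin hmax
    _ ≤ √(∫ ω, min (Z ω) 1 ∂μ) * √2 := by gcongr
    _ = √2 * √(∫ ω, min (Z ω) 1 ∂μ) := mul_comm _ _
end

section
/- For any nonnegative random variable Z with E[Z] = 1, any γ ∈ (0,1), and any event A, one has E[Z^γ] ≤ P(A)^{1-γ} + (E[Z·1_{A^c}])^γ. -/
open MeasureTheory Set

open scoped ENNReal

/-! Split `∫ Z^γ` over `A` and `Aᶜ` and apply Hölder's inequality with exponents `1/γ` and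
`1/(1-γ)` on each piece: `∫_S Z^γ ≤ (∫_S Z)^γ P(S)^(1-γ)`. On `A` the factor `(∫_A Z)^γ` is at
most `1` because `E[Z] = 1`; on `Aᶜ` the factor `P(Aᶜ)^(1-γ)` is at most `1`. -/

section
variable {α : Type*} [MeasurableSpace α] {μ : Measure α} {f : α → ℝ≥0∞} {p : ℝ}

theorem lintegral_rpow_le_lintegral_rpow_mul_measure_univ (hf : AEMeasurable f μ) (hp0 : 0 < p)
    (hp1 : p < 1) : ∫⁻ x, f x ^ p ∂μ ≤ (∫⁻ x, f x ∂μ) ^ p * μ univ ^ (1 - p) := by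
  have hpq : p⁻¹.HolderConjugate (1 - p)⁻¹ := by
    simpa only [one_div] using Real.holderConjugate_one_div hp0 (by linarith) (by ring)
  simpa [← ENNReal.rpow_mul, hp0.ne', (sub_pos.2 hp1).ne'] using
    ENNReal.lintegral_mul_le_Lp_mul_Lq μ hpq (hf.pow_const p) (aemeasurable_const (b := 1))

theorem lintegral_rpow_le_measure_rpow_add_compl [IsProbabilityMeasure μ]
    (hf : AEMeasurable f μ) (hf_le : ∫⁻ x, f x ∂μ ≤ 1) (hp0 : 0 < p) (hp1 : p < 1)
    (s : Set α) :
    ∫⁻ x, f x ^ p ∂μ ≤ μ s ^ (1 - p) + (∫⁻ x in sᶜ, f x ∂μ) ^ p := by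
  have holder (t : Set α) : ∫⁻ x in t, f x ^ p ∂μ ≤ (∫⁻ x in t, f x ∂μ) ^ p * μ t ^ (1 - p) := by
    simpa using lintegral_rpow_le_lintegral_rpow_mul_measure_univ hf.restrict hp0 hp1
  calc ∫⁻ x, f x ^ p ∂μ ≤ ∫⁻ x in s, f x ^ p ∂μ + ∫⁻ x in sᶜ, f x ^ p ∂μ := by
        simpa using lintegral_union_le (fun x ↦ f x ^ p) s sᶜ
    _ ≤ 1 ^ p * μ s ^ (1 - p) + (∫⁻ x in sᶜ, f x ∂μ) ^ p * 1 ^ (1 - p) := by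
        gcongr ?_ + ?_
        · refine (holder s).trans ?_
          gcongr
          exact (setLIntegral_le_lintegral s f).trans hf_le
        · refine (holder sᶜ).trans ?_
          gcongr
          exact prob_le_one
    _ = μ s ^ (1 - p) + (∫⁻ x in sᶜ, f x ∂μ) ^ p := by simp
end

theorem stmt_2_general {Ω : Type*} [MeasurableSpace Ω] (μ : Measure Ω) [IsProbabilityMeasure μ]
    (Z : Ω → ℝ) (hZpos : ∀ ω, 0 ≤ Z ω) (hZmeas : Measurable Z)
    (hmean : ∫ ω, Z ω ∂μ = 1)
    (γ : ℝ) (hγ : γ ∈ Set.Ioo (0:ℝ) 1) (A : Set Ω) :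
    (∫ ω, (Z ω) ^ γ ∂μ) ≤ (μ A).toReal ^ (1 - γ) + (∫ ω in Aᶜ, Z ω ∂μ) ^ γ := by
  obtain ⟨hγ0, hγ1⟩ := hγ
  set f : Ω → ℝ≥0∞ := fun ω ↦ ENNReal.ofReal (Z ω)
  have integral_eq_toReal (ν : Measure Ω) : ∫ ω, Z ω ∂ν = (∫⁻ ω, f ω ∂ν).toReal :=
    integral_eq_lintegral_of_nonneg_ae (.of_forall hZpos) hZmeas.aestronglyMeasurable
  have hf_one : ∫⁻ ω, f ω ∂μ = 1 := by
    rw [← ENNReal.toReal_eq_one_iff, ← integral_eq_toReal, hmean]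
  have hpow : ∫ ω, Z ω ^ γ ∂μ = (∫⁻ ω, f ω ^ γ ∂μ).toReal := by
    rw [integral_eq_lintegral_of_nonneg_ae (.of_forall fun ω ↦ Real.rpow_nonneg (hZpos ω) γ)
      (hZmeas.pow_const γ).aestronglyMeasurable]
    simp_rw [f, ENNReal.ofReal_rpow_of_nonneg (hZpos _) hγ0.le]
  have hfin : (∫⁻ ω in Aᶜ, f ω ∂μ) ^ γ ≠ ⊤ :=
    ENNReal.rpow_ne_top_of_nonneg hγ0.le (ne_top_of_le_ne_top ENNReal.one_ne_top
      (hf_one ▸ setLIntegral_le_lintegral _ _))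
  rw [hpow, integral_eq_toReal, ENNReal.toReal_rpow, ENNReal.toReal_rpow,
    ← ENNReal.toReal_add (by finiteness) hfin]
  exact ENNReal.toReal_mono (by finiteness) <|
    lintegral_rpow_le_measure_rpow_add_compl hZmeas.ennreal_ofReal.aemeasurable hf_one.le
      hγ0 hγ1 A

/-- For any nonnegative random variable `Z` with `E[Z] = 1`, any `γ ∈ (0,1)`, and any event
`A`, one has `E[Z^γ] ≤ P(A)^{1-γ} + (E[Z·1_{A^c}])^γ`. -/
theorem stmt_2 {Ω : Type*} [MeasurableSpace Ω] (μ : Measure Ω) [IsProbabilityMeasure μ]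
    (Z : Ω → ℝ) (hZpos : ∀ ω, 0 ≤ Z ω) (hZmeas : Measurable Z) (hZint : Integrable Z μ)
    (hmean : ∫ ω, Z ω ∂μ = 1)
    (γ : ℝ) (hγ : γ ∈ Set.Ioo (0:ℝ) 1) (A : Set Ω) (hA : MeasurableSet A) :
    (∫ ω, (Z ω) ^ γ ∂μ) ≤ (μ A).toReal ^ (1 - γ) + (∫ ω in Aᶜ, Z ω ∂μ) ^ γ :=
  stmt_2_general μ Z hZpos hZmeas hmean γ hγ A
end

section
/- For any nonnegative random variable Z, E[min(Z,1)] ≥ E[Z]^2 / (1 + E[Z^2]). -/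
/-!
Since `Z = min(Z,1) · max(Z,1)`, Cauchy–Schwarz gives
`E[Z]² ≤ E[min(Z,1)²] · E[max(Z,1)²]`. For `Z ≥ 0` one has `min(Z,1)² ≤ min(Z,1)` and
`max(Z,1)² ≤ 1 + Z²`, so `E[Z]² ≤ E[min(Z,1)] · (1 + E[Z²])`.
-/

open MeasureTheory

theorem sq_integral_mul_le_integral_sq_mul_integral_sq {α : Type*} [MeasurableSpace α]
    {μ : Measure α} {f g : α → ℝ} (hf : MemLp f 2 μ) (hg : MemLp g 2 μ) :
    (∫ a, f a * g a ∂μ) ^ 2 ≤ (∫ a, f a ^ 2 ∂μ) * ∫ a, g a ^ 2 ∂μ := by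
  have inner_toLp : ∀ {u v : α → ℝ} (hu : MemLp u 2 μ) (hv : MemLp v 2 μ),
      inner ℝ (hu.toLp u) (hv.toLp v) = ∫ a, u a * v a ∂μ := fun hu hv => by
    rw [L2.inner_def]
    refine integral_congr_ae ?_
    filter_upwards [hu.coeFn_toLp, hv.coeFn_toLp] with a hua hva
    simp [hua, hva, mul_comm]
  have := real_inner_mul_inner_self_le (hf.toLp f) (hg.toLp g)
  simp only [sq]
  rwa [inner_toLp hf hg, inner_toLp hf hf, inner_toLp hg hg] at this

theorem sq_min_one_le_min_one {a : ℝ} (ha : 0 ≤ a) : min a 1 ^ 2 ≤ min a 1 := by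
  nlinarith [le_min ha zero_le_one, min_le_right a 1]

theorem sq_max_one_le_one_add_sq (a : ℝ) : max a 1 ^ 2 ≤ 1 + a ^ 2 := by
  rcases le_total a 1 with h | h <;> simp [h, sq_nonneg]

theorem sq_integral_le_integral_min_one_mul {Ω : Type*} [MeasurableSpace Ω] {μ : Measure Ω}
    [IsProbabilityMeasure μ] {Z : Ω → ℝ} (hZ_nonneg : ∀ ω, 0 ≤ Z ω)
    (hZ : AEStronglyMeasurable Z μ) (hZ_sq : Integrable (fun ω => Z ω ^ 2) μ) :
    (∫ ω, Z ω ∂μ) ^ 2 ≤ (∫ ω, min (Z ω) 1 ∂μ) * (1 + ∫ ω, Z ω ^ 2 ∂μ) := by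
  have hZ_L2 : MemLp Z 2 μ := (memLp_two_iff_integrable_sq hZ).2 hZ_sq
  have hmin_L2 : MemLp (fun ω => min (Z ω) 1) 2 μ :=
    hZ_L2.of_le (hZ.inf aestronglyMeasurable_const) <| .of_forall fun ω => by
      simp [abs_of_nonneg, hZ_nonneg ω]
  have hmax_L2 : MemLp (fun ω => max (Z ω) 1) 2 μ := by
    refine (hZ_L2.add (memLp_const 1)).of_le (hZ.sup aestronglyMeasurable_const)
      (.of_forall fun ω => ?_)
    have hZω := hZ_nonneg ω
    simp only [Real.norm_eq_abs, Pi.add_apply]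
    rw [abs_of_nonneg (by positivity), abs_of_nonneg (by positivity)]
    exact max_le_add_of_nonneg hZω zero_le_one
  have hmin_sq : ∫ ω, min (Z ω) 1 ^ 2 ∂μ ≤ ∫ ω, min (Z ω) 1 ∂μ :=
    integral_mono hmin_L2.integrable_sq (hmin_L2.integrable one_le_two) fun ω =>
      sq_min_one_le_min_one (hZ_nonneg ω)
  have hmax_sq : ∫ ω, max (Z ω) 1 ^ 2 ∂μ ≤ 1 + ∫ ω, Z ω ^ 2 ∂μ :=
    calc ∫ ω, max (Z ω) 1 ^ 2 ∂μ ≤ ∫ ω, 1 + Z ω ^ 2 ∂μ :=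
          integral_mono hmax_L2.integrable_sq ((integrable_const 1).add hZ_sq) fun ω =>
            sq_max_one_le_one_add_sq (Z ω)
      _ = 1 + ∫ ω, Z ω ^ 2 ∂μ := by
          rw [integral_add (integrable_const 1) hZ_sq, integral_const, probReal_univ, one_smul]
  calc (∫ ω, Z ω ∂μ) ^ 2 = (∫ ω, min (Z ω) 1 * max (Z ω) 1 ∂μ) ^ 2 := by
        simp only [min_mul_max, mul_one]
    _ ≤ (∫ ω, min (Z ω) 1 ^ 2 ∂μ) * ∫ ω, max (Z ω) 1 ^ 2 ∂μ :=
        sq_integral_mul_le_integral_sq_mul_integral_sq hmin_L2 hmax_L2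
    _ ≤ (∫ ω, min (Z ω) 1 ∂μ) * (1 + ∫ ω, Z ω ^ 2 ∂μ) :=
        mul_le_mul hmin_sq hmax_sq (integral_nonneg fun ω => sq_nonneg _)
          (integral_nonneg fun ω => le_min (hZ_nonneg ω) zero_le_one)

theorem stmt_3_general {Ω : Type*} [MeasurableSpace Ω] (μ : Measure Ω) [IsProbabilityMeasure μ]
    (Z : Ω → ℝ) (hZpos : ∀ ω, 0 ≤ Z ω) (hZmeas : Measurable Z)
    (hZ2int : Integrable (fun ω => (Z ω) ^ 2) μ) :
    (∫ ω, Z ω ∂μ) ^ 2 / (1 + ∫ ω, (Z ω) ^ 2 ∂μ) ≤ ∫ ω, min (Z ω) 1 ∂μ := by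
  rw [div_le_iff₀ (by positivity)]
  exact sq_integral_le_integral_min_one_mul hZpos hZmeas.aestronglyMeasurable hZ2int

/-- For any nonnegative random variable `Z` (with finite second moment),
`E[min(Z,1)] ≥ E[Z]² / (1 + E[Z²])`. -/
theorem stmt_3 {Ω : Type*} [MeasurableSpace Ω] (μ : Measure Ω) [IsProbabilityMeasure μ]
    (Z : Ω → ℝ) (hZpos : ∀ ω, 0 ≤ Z ω) (hZmeas : Measurable Z)
    (hZint : Integrable Z μ) (hZ2int : Integrable (fun ω => (Z ω) ^ 2) μ) :
    (∫ ω, Z ω ∂μ) ^ 2 / (1 + ∫ ω, (Z ω) ^ 2 ∂μ) ≤ ∫ ω, min (Z ω) 1 ∂μ :=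
  stmt_3_general μ Z hZpos hZmeas hZ2int
end

section
/- Let α_1,…,α_K be nonnegative reals summing to 1 and Z_1,…,Z_K nonnegative random variables. Setting Z = Σ_i α_i Z_i, one has E[min(Z,1)] ≤ 2 · max_{1≤i≤K} E[min(Z_i, K)]. -/
open MeasureTheory Finset

/-
Pointwise, truncation at `1` is subadditive on nonnegative reals, so
`min (∑ αᵢ Zᵢ) 1 ≤ ∑ min (αᵢ Zᵢ) 1`, and each term is at most `(K⁻¹ + αᵢ) min (Zᵢ, K)`:
it is `≤ αᵢ Zᵢ` when `Zᵢ ≤ K` and `≤ 1 = K⁻¹ K` otherwise. Integrating and bounding each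
`E[min (Zᵢ, K)]` by the maximum leaves the factor `∑ (K⁻¹ + αᵢ) = 2`.
-/

lemma min_add_le_min_add_min {a b c : ℝ} (ha : 0 ≤ a) (hb : 0 ≤ b) (hc : 0 ≤ c) :
    min (a + b) c ≤ min a c + min b c := by
  rw [min_def, min_def, min_def]
  split_ifs <;> linarith

lemma min_sum_le_sum_min {ι : Type*} (s : Finset ι) {x : ι → ℝ} (hx : ∀ i ∈ s, 0 ≤ x i)
    {c : ℝ} (hc : 0 ≤ c) :
    min (∑ i ∈ s, x i) c ≤ ∑ i ∈ s, min (x i) c :=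
  le_sum_of_subadditive_on_pred (fun t => min t c) (0 ≤ ·) (by simp [hc])
    (fun _ _ ha hb => min_add_le_min_add_min ha hb hc) (fun _ _ => add_nonneg) x hx

lemma min_mul_le_inv_add_mul_min {a z k : ℝ} (ha : 0 ≤ a) (hz : 0 ≤ z) (hk : 1 ≤ k) :
    min (a * z) 1 ≤ (k⁻¹ + a) * min z k := by
  have hk₀ : 0 < k := by linarith
  rcases le_total z k with hzk | hkz
  · rw [min_eq_left hzk]
    calc min (a * z) 1 ≤ a * z := min_le_left _ _
      _ ≤ (k⁻¹ + a) * z := by gcongr; exact le_add_of_nonneg_left (by positivity)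
  · rw [min_eq_right hkz, add_mul, inv_mul_cancel₀ hk₀.ne']
    calc min (a * z) 1 ≤ 1 := min_le_right _ _
      _ ≤ 1 + a * k := le_add_of_nonneg_right (by positivity)

lemma integrable_min_const_of_nonneg {Ω : Type*} [MeasurableSpace Ω] {μ : Measure Ω}
    [IsFiniteMeasure μ] {f : Ω → ℝ} (hf : AEMeasurable f μ) (hf₀ : ∀ ω, 0 ≤ f ω) (c : ℝ) :
    Integrable (fun ω => min (f ω) c) μ :=
  .of_bound (hf.min aemeasurable_const).aestronglyMeasurable |c| <| .of_forall fun ω =>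
    abs_le.2 ⟨le_min ((neg_nonpos.2 (abs_nonneg c)).trans (hf₀ ω)) (neg_abs_le c),
      (min_le_right _ _).trans (le_abs_self c)⟩

theorem integral_min_sum_le {Ω ι : Type*} [MeasurableSpace Ω] [Fintype ι] (μ : Measure Ω)
    [IsFiniteMeasure μ] {α : ι → ℝ} (hα : ∀ i, 0 ≤ α i) {Z : ι → Ω → ℝ}
    (hZ₀ : ∀ i ω, 0 ≤ Z i ω) (hZ : ∀ i, AEMeasurable (Z i) μ) {k : ℝ} (hk : 1 ≤ k) :
    ∫ ω, min (∑ i, α i * Z i ω) 1 ∂μ ≤ ∑ i, (k⁻¹ + α i) * ∫ ω, min (Z i ω) k ∂μ := by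
  have hαZ₀ : ∀ ω i, 0 ≤ α i * Z i ω := fun ω i => mul_nonneg (hα i) (hZ₀ i ω)
  have hpointwise : ∀ ω, min (∑ i, α i * Z i ω) 1 ≤ ∑ i, (k⁻¹ + α i) * min (Z i ω) k :=
    fun ω => (min_sum_le_sum_min _ (fun i _ => hαZ₀ ω i) zero_le_one).trans <|
      sum_le_sum fun i _ => min_mul_le_inv_add_mul_min (hα i) (hZ₀ i ω) hk
  have hint : ∀ i, Integrable (fun ω => (k⁻¹ + α i) * min (Z i ω) k) μ :=
    fun i => (integrable_min_const_of_nonneg (hZ i) (hZ₀ i) k).const_mul _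
  calc ∫ ω, min (∑ i, α i * Z i ω) 1 ∂μ
      ≤ ∫ ω, ∑ i, (k⁻¹ + α i) * min (Z i ω) k ∂μ :=
        integral_mono
          (integrable_min_const_of_nonneg (Finset.aemeasurable_fun_sum _ fun i _ => (hZ i).const_mul _)
            (fun ω => sum_nonneg fun i _ => hαZ₀ ω i) 1)
          (integrable_finsetSum _ fun i _ => hint i) hpointwise
    _ = ∑ i, (k⁻¹ + α i) * ∫ ω, min (Z i ω) k ∂μ := by
        rw [integral_finsetSum _ fun i _ => hint i]
        simp_rw [integral_const_mul]

theorem stmt_4_general {Ω : Type*} [MeasurableSpace Ω] (μ : Measure Ω) [IsProbabilityMeasure μ]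
    (K : ℕ) (α : Fin K → ℝ) (hα : ∀ i, 0 ≤ α i) (hαsum : ∑ i, α i = 1)
    (Z : Fin K → Ω → ℝ) (hZpos : ∀ i ω, 0 ≤ Z i ω) (hZmeas : ∀ i, Measurable (Z i)) :
    (∫ ω, min (∑ i, α i * Z i ω) 1 ∂μ) ≤ 2 * ⨆ i, ∫ ω, min (Z i ω) (K : ℝ) ∂μ := by
  rcases Nat.eq_zero_or_pos K with rfl | hK
  · simp
  set M := ⨆ i, ∫ ω, min (Z i ω) (K : ℝ) ∂μ
  have hle_M : ∀ i, ∫ ω, min (Z i ω) (K : ℝ) ∂μ ≤ M :=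
    le_ciSup (Set.finite_range _).bddAbove
  have hweights : ∑ i : Fin K, ((K : ℝ)⁻¹ + α i) = 2 := by
    rw [sum_add_distrib, hαsum, sum_const, card_univ, Fintype.card_fin, nsmul_eq_mul,
      mul_inv_cancel₀ (by positivity)]
    norm_num
  calc (∫ ω, min (∑ i, α i * Z i ω) 1 ∂μ)
      ≤ ∑ i, ((K : ℝ)⁻¹ + α i) * ∫ ω, min (Z i ω) (K : ℝ) ∂μ :=
        integral_min_sum_le μ hα hZpos (fun i => (hZmeas i).aemeasurable) (by exact_mod_cast hK)
    _ ≤ ∑ i, ((K : ℝ)⁻¹ + α i) * M := by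
        gcongr with i
        · exact add_nonneg (by positivity) (hα i)
        · exact hle_M i
    _ = 2 * M := by rw [← sum_mul, hweights]

/-- Let `α_1,…,α_K` be nonnegative reals summing to `1` and `Z_1,…,Z_K` nonnegative random
variables. Setting `Z = Σ_i α_i Z_i`, one has
`E[min(Z,1)] ≤ 2 · max_{1≤i≤K} E[min(Z_i, K)]`. -/
theorem stmt_4 {Ω : Type*} [MeasurableSpace Ω] (μ : Measure Ω) [IsProbabilityMeasure μ]
    (K : ℕ) (hK : 0 < K) (α : Fin K → ℝ) (hα : ∀ i, 0 ≤ α i) (hαsum : ∑ i, α i = 1)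
    (Z : Fin K → Ω → ℝ) (hZpos : ∀ i ω, 0 ≤ Z i ω) (hZmeas : ∀ i, Measurable (Z i)) :
    (∫ ω, min (∑ i, α i * Z i ω) 1 ∂μ) ≤ 2 * ⨆ i, ∫ ω, min (Z i ω) (K : ℝ) ∂μ :=
  stmt_4_general μ K α hα hαsum Z hZpos hZmeas
end

section
/- Define φ^{(0)}(v) = 1 for v ∈ (0,1) and iteratively φ^{(k)}(v) = ∫_0^1 φ^{(k-1)}(u)/(v+u) du. Then for every k ≥ 0 and every v ∈ (0,1), φ^{(k)}(v) ≤ π^k / √v. -/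
open MeasureTheory

/-- The iterates `φ^{(0)} ≡ 1`, `φ^{(k)}(v) = ∫_0^1 φ^{(k-1)}(u)/(v+u) du`. -/
noncomputable def phiIter : ℕ → ℝ → ℝ
  | 0 => fun _ => 1
  | (k + 1) => fun v => ∫ u in (0:ℝ)..1, phiIter k u / (v + u)

/-!
Induction on `k`, with `π^k / √u` as the majorant of `φ^{(k)}`. The inductive step is the explicit
integral `∫_0^1 du / (√u (v+u)) = (2/√v) arctan (1/√v)`, which is at most `π/√v` since
`arctan < π/2`.
-/

open Real Set

lemma intervalIntegrable_one_div_sqrt_mul_add {v b : ℝ} (hv : 0 < v) (hb : 0 ≤ b) :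
    IntervalIntegrable (fun u : ℝ => 1 / (√u * (v + u))) volume 0 b := by
  refine IntervalIntegrable.mono_fun' (g := fun u : ℝ => v⁻¹ * u ^ (-(1 / 2) : ℝ))
    ((intervalIntegral.intervalIntegrable_rpow' (by norm_num)).const_mul _)
    (by measurability) ?_
  filter_upwards [ae_restrict_mem measurableSet_uIoc] with u hu
  rw [uIoc_of_le hb] at hu
  have hsu : 0 < √u := sqrt_pos.2 hu.1
  have hvu : 0 < v + u := by linarith [hu.1]
  rw [norm_of_nonneg (by positivity), rpow_neg hu.1.le, ← sqrt_eq_rpow, ← mul_inv, ← one_div,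
    mul_comm]
  exact one_div_le_one_div_of_le (by positivity) (by nlinarith [hu.1])

lemma hasDerivAt_arctan_sqrt_div_sqrt {v x : ℝ} (hv : 0 < v) (hx : 0 < x) :
    HasDerivAt (fun u => 2 / √v * arctan (√u / √v)) (1 / (√x * (v + x))) x := by
  have hsv : 0 < √v := sqrt_pos.2 hv
  have hsx : 0 < √x := sqrt_pos.2 hx
  refine (((hasDerivAt_sqrt hx.ne').div_const √v).arctan.const_mul (2 / √v)).congr_deriv ?_
  rw [← sq_sqrt hx.le, ← sq_sqrt hv.le]
  field_simp
  simp only [sqrt_sq hsv.le, sqrt_sq hsx.le]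

theorem integral_one_div_sqrt_mul_add {v b : ℝ} (hv : 0 < v) (hb : 0 ≤ b) :
    ∫ u in (0:ℝ)..b, 1 / (√u * (v + u)) = 2 / √v * arctan (√b / √v) := by
  rw [intervalIntegral.integral_eq_sub_of_hasDeriv_right_of_le hb (by fun_prop)
    (fun x hx => (hasDerivAt_arctan_sqrt_div_sqrt hv hx.1).hasDerivWithinAt)
    (intervalIntegrable_one_div_sqrt_mul_add hv hb)]
  simp

lemma integral_one_div_sqrt_mul_add_le {v : ℝ} (hv : 0 < v) :
    ∫ u in (0:ℝ)..1, 1 / (√u * (v + u)) ≤ π / √v := by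
  rw [integral_one_div_sqrt_mul_add hv zero_le_one]
  calc 2 / √v * arctan (√1 / √v) ≤ 2 / √v * (π / 2) := by
        gcongr
        exact (arctan_lt_pi_div_two _).le
    _ = π / √v := by ring

lemma integral_div_add_le_of_le_div_sqrt {f : ℝ → ℝ} {C v : ℝ} (hC : 0 ≤ C) (hv : 0 < v)
    (hf : ∀ u ∈ Ioo (0:ℝ) 1, f u ≤ C / √u) :
    ∫ u in (0:ℝ)..1, f u / (v + u) ≤ C * π / √v := by
  by_cases hInt : IntervalIntegrable (fun u => f u / (v + u)) volume 0 1
  swap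
  · -- the junk value `0` of a non-integrable integral is below the bound
    rw [intervalIntegral.integral_undef hInt]
    positivity
  have hg := (intervalIntegrable_one_div_sqrt_mul_add hv zero_le_one).const_mul C
  calc ∫ u in (0:ℝ)..1, f u / (v + u)
      = ∫ u in Ioo (0:ℝ) 1, f u / (v + u) := by
        rw [intervalIntegral.integral_of_le zero_le_one, integral_Ioc_eq_integral_Ioo]
    _ ≤ ∫ u in Ioo (0:ℝ) 1, C * (1 / (√u * (v + u))) := by
        refine setIntegral_mono_on (hInt.1.mono_set Ioo_subset_Ioc_self)
          (hg.1.mono_set Ioo_subset_Ioc_self) measurableSet_Ioo fun u hu => ?_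
        have hvu : 0 < v + u := by linarith [hu.1]
        calc f u / (v + u) ≤ C / √u / (v + u) := by gcongr; exact hf u hu
          _ = C * (1 / (√u * (v + u))) := by field_simp
    _ = C * ∫ u in (0:ℝ)..1, 1 / (√u * (v + u)) := by
        rw [intervalIntegral.integral_of_le zero_le_one, integral_Ioc_eq_integral_Ioo,
          ← integral_const_mul]
    _ ≤ C * (π / √v) := by gcongr; exact integral_one_div_sqrt_mul_add_le hv
    _ = C * π / √v := by ring

/-- For every `k ≥ 0` and every `v ∈ (0,1)`, `φ^{(k)}(v) ≤ π^k / √v`. -/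
theorem stmt_8 :
    ∀ (k : ℕ) (v : ℝ), v ∈ Set.Ioo (0:ℝ) 1 →
      phiIter k v ≤ Real.pi ^ k / Real.sqrt v := by
  intro k
  induction k with
  | zero =>
    intro v hv
    rw [phiIter, pow_zero, le_div_iff₀ (sqrt_pos.2 hv.1), one_mul]
    exact sqrt_le_one.2 hv.2.le
  | succ k ih =>
    intro v hv
    rw [pow_succ]
    exact integral_div_add_le_of_le_div_sqrt (by positivity) hv.1 ih
end

section
/- Let f: (0,∞) → (0,∞) be unimodal (increasing then decreasing) with maximum at x* ∈ (0,∞), and let r > 0. Then (1/r)·Σ_{k=1}^∞ f(k/r) ≤ (⌈r⌉/r)·( Σ_{i=1}^∞ f(i) + f(x*) ), provided the right-hand side is finite. -/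
/-!
Cut `(0, ∞)` into the unit blocks `(i, i + 1]`. On a block lying left of the mode `x*`,
`f` is bounded by its value at the right endpoint `i + 1`; on one lying right of it, by its
value at the left endpoint `i`; on the block containing `x*`, by `f x*`. These bounds are the
sequence `f 1, f 2, …` with `f x*` inserted at the mode's block, so their total is at most
`∑ f i + f x*`. Each block `(i, i + 1]` contains at most `⌈r⌉` of the points `k / r`, hence
`∑ₖ f (k / r) ≤ ⌈r⌉ (∑ᵢ f i + f x*)`.
-/

open Finset

section SeqInsert

variable {M : Type*} [AddCommMonoid M]

def seqInsert (m : ℕ) (c : M) (g : ℕ → M) (i : ℕ) : M :=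
  if i < m then g i else if i = m then c else g (i - 1)

theorem sum_range_succ_seqInsert {m N : ℕ} (c : M) (g : ℕ → M) (hmN : m ≤ N) :
    ∑ i ∈ range (N + 1), seqInsert m c g i = ∑ i ∈ range N, g i + c := by
  induction N, hmN using Nat.le_induction with
  | base =>
    have hbelow : ∑ i ∈ range m, seqInsert m c g i = ∑ i ∈ range m, g i :=
      sum_congr rfl fun i hi => if_pos (mem_range.1 hi)
    rw [sum_range_succ, hbelow]
    simp [seqInsert]
  | succ N hmN ih =>
    have hN : seqInsert m c g (N + 1) = g N := by
      simp only [seqInsert, if_neg (show ¬N + 1 < m by omega), if_neg (show N + 1 ≠ m by omega),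
        Nat.add_sub_cancel]
    rw [sum_range_succ, ih, hN, sum_range_succ, add_right_comm]

variable [PartialOrder M]

theorem seqInsert_nonneg {m : ℕ} {c : M} {g : ℕ → M} (hc : 0 ≤ c) (hg : ∀ i, 0 ≤ g i) (i : ℕ) :
    0 ≤ seqInsert m c g i := by
  unfold seqInsert
  split_ifs
  exacts [hg _, hc, hg _]

theorem sum_seqInsert_le_tsum_add [IsOrderedAddMonoid M] [TopologicalSpace M]
    [OrderClosedTopology M] {m : ℕ} {c : M} {g : ℕ → M} (hc : 0 ≤ c) (hg : ∀ i, 0 ≤ g i)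
    (hgs : Summable g) (T : Finset ℕ) :
    ∑ i ∈ T, seqInsert m c g i ≤ ∑' i, g i + c := by
  set N := max m (T.sup id + 1)
  calc ∑ i ∈ T, seqInsert m c g i
      ≤ ∑ i ∈ range (N + 1), seqInsert m c g i :=
        sum_le_sum_of_subset_of_nonneg
          ((subset_range_sup_succ T).trans (range_subset_range.2 (by omega)))
          fun i _ _ => seqInsert_nonneg hc hg i
    _ = ∑ i ∈ range N, g i + c := sum_range_succ_seqInsert c g (le_max_left _ _)
    _ ≤ ∑' i, g i + c := add_le_add_left (hgs.sum_le_tsum _ fun i _ => hg i) c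

end SeqInsert

theorem Finset.sum_comp_le_nsmul_sum_image {ι κ M : Type*} [AddCommMonoid M] [PartialOrder M]
    [IsOrderedAddMonoid M] [DecidableEq κ] {s : Finset ι} {I : ι → κ} {b : κ → M} {n : ℕ}
    (hb : ∀ i ∈ s.image I, 0 ≤ b i) (hcard : ∀ i ∈ s.image I, #{k ∈ s | I k = i} ≤ n) :
    ∑ k ∈ s, b (I k) ≤ n • ∑ i ∈ s.image I, b i := by
  rw [sum_comp, smul_sum]
  exact sum_le_sum fun i hi => nsmul_le_nsmul_left (hb i hi) (hcard i hi)

theorem card_filter_natCast_mem_Ioc_le (S : Finset ℕ) (a r : ℝ) :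
    #(S.filter fun k : ℕ => (k : ℝ) ∈ Set.Ioc a (a + r)) ≤ ⌈r⌉₊ := by
  calc #(S.filter fun k : ℕ => (k : ℝ) ∈ Set.Ioc a (a + r))
      ≤ #(Ioc ⌊a⌋ (⌊a⌋ + ⌈r⌉₊)) := by
        refine card_le_card_of_injOn (fun k : ℕ => (k : ℤ)) (fun k hk => ?_)
          Nat.cast_injective.injOn
        obtain ⟨hak, hkar⟩ := (mem_filter.1 hk).2
        have hk_lt : (k : ℝ) < ⌊a⌋ + ⌈r⌉₊ + 1 := by
          linarith [Int.lt_floor_add_one a, Nat.le_ceil r]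
        refine mem_Ioc.2 ⟨Int.floor_lt.2 (by exact_mod_cast hak), ?_⟩
        exact Int.lt_add_one_iff.1 (by exact_mod_cast hk_lt)
    _ = ⌈r⌉₊ := by simp

theorem Nat.ceil_sub_one_eq_iff {x : ℝ} {i : ℕ} (hx : 0 < x) :
    ⌈x⌉₊ - 1 = i ↔ (i : ℝ) < x ∧ x ≤ i + 1 := by
  have hpos : 0 < ⌈x⌉₊ := Nat.ceil_pos.2 hx
  rw [show ⌈x⌉₊ - 1 = i ↔ ⌈x⌉₊ = i + 1 by omega, Nat.ceil_eq_iff (by omega)]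
  push_cast
  simp

section Unimodal

variable {f : ℝ → ℝ} {xs : ℝ} (hxs : 0 < xs)
  (hmono : MonotoneOn f (Set.Ioc 0 xs)) (hanti : AntitoneOn f (Set.Ici xs))
include hxs hmono hanti

theorem apply_le_apply_mode {x : ℝ} (hx : 0 < x) : f x ≤ f xs := by
  rcases le_total x xs with h | h
  · exact hmono ⟨hx, h⟩ ⟨hxs, le_rfl⟩ h
  · exact hanti Set.self_mem_Ici h h

/-- `⌈x⌉₊ - 1` is the index `i` of the block `(i, i + 1]` containing `x`. -/
theorem apply_le_seqInsert_ceil {x : ℝ} (hx : 0 < x) :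
    f x ≤ seqInsert (⌈xs⌉₊ - 1) (f xs) (fun n : ℕ => f (n + 1)) (⌈x⌉₊ - 1) := by
  set i := ⌈x⌉₊ - 1
  set m := ⌈xs⌉₊ - 1
  obtain ⟨hix, hxi⟩ := (Nat.ceil_sub_one_eq_iff (i := i) hx).1 rfl
  obtain ⟨hmxs, hxsm⟩ := (Nat.ceil_sub_one_eq_iff (i := m) hxs).1 rfl
  unfold seqInsert
  split_ifs with hlt heq
  · have hi1 : (i : ℝ) + 1 ≤ m := by exact_mod_cast hlt
    exact hmono ⟨hx, by linarith⟩ ⟨by positivity, by linarith⟩ hxi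
  · exact apply_le_apply_mode hxs hmono hanti hx
  · have hmi : (m : ℝ) + 1 ≤ i := by exact_mod_cast (show m + 1 ≤ i by omega)
    have hcast : ((i - 1 : ℕ) : ℝ) + 1 = i := by
      rw [Nat.cast_sub (by omega)]
      ring
    show f x ≤ f (((i - 1 : ℕ) : ℝ) + 1)
    rw [hcast]
    exact hanti (show xs ≤ i by linarith) (show xs ≤ x by linarith) hix.le

theorem sum_apply_div_le (hf0 : ∀ x, 0 < x → 0 ≤ f x) {r : ℝ} (hr : 0 < r)
    (hsum : Summable fun i : ℕ => f ((i : ℝ) + 1)) (S : Finset ℕ) :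
    ∑ k ∈ S, f (((k : ℝ) + 1) / r) ≤ ⌈r⌉₊ * ((∑' i : ℕ, f ((i : ℝ) + 1)) + f xs) := by
  classical
  set b := seqInsert (⌈xs⌉₊ - 1) (f xs) (fun n : ℕ => f (n + 1))
  set I := fun k : ℕ => ⌈((k : ℝ) + 1) / r⌉₊ - 1
  have hb : ∀ i, 0 ≤ b i :=
    seqInsert_nonneg (hf0 xs hxs) fun n => hf0 _ (by positivity)
  have hfiber (i : ℕ) : #{k ∈ S | I k = i} ≤ ⌈r⌉₊ := by
    convert card_filter_natCast_mem_Ioc_le S (i * r - 1) r using 2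
    refine filter_congr fun k _ => ?_
    rw [Nat.ceil_sub_one_eq_iff (by positivity), lt_div_iff₀ hr, div_le_iff₀ hr, Set.mem_Ioc]
    constructor <;> rintro ⟨h₁, h₂⟩ <;> constructor <;> linarith
  calc ∑ k ∈ S, f (((k : ℝ) + 1) / r)
      ≤ ∑ k ∈ S, b (I k) := sum_le_sum fun k _ =>
        apply_le_seqInsert_ceil hxs hmono hanti (by positivity)
    _ ≤ ⌈r⌉₊ • ∑ i ∈ S.image I, b i :=
        sum_comp_le_nsmul_sum_image (fun i _ => hb i) fun i _ => hfiber i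
    _ ≤ ⌈r⌉₊ • ((∑' i : ℕ, f ((i : ℝ) + 1)) + f xs) :=
        nsmul_le_nsmul_right (sum_seqInsert_le_tsum_add (hf0 xs hxs)
          (fun n => hf0 _ (by positivity)) hsum _) _
    _ = ⌈r⌉₊ * ((∑' i : ℕ, f ((i : ℝ) + 1)) + f xs) := nsmul_eq_mul _ _

end Unimodal

theorem stmt_10_general (f : ℝ → ℝ) (hfpos : ∀ x, 0 < x → 0 < f x)
    (xs : ℝ) (hxs : 0 < xs)
    (hmono : MonotoneOn f (Set.Ioc 0 xs)) (hanti : AntitoneOn f (Set.Ici xs))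
    (r : ℝ) (hr : 0 < r)
    (hsum2 : Summable fun i : ℕ => f ((i : ℝ) + 1)) :
    (1 / r) * ∑' k : ℕ, f (((k : ℝ) + 1) / r) ≤
      ((⌈r⌉₊ : ℝ) / r) * ((∑' i : ℕ, f ((i : ℝ) + 1)) + f xs) := by
  have hbound_nonneg : 0 ≤ (⌈r⌉₊ : ℝ) * ((∑' i : ℕ, f ((i : ℝ) + 1)) + f xs) :=
    mul_nonneg (Nat.cast_nonneg _) (add_nonneg
      (tsum_nonneg fun i => (hfpos _ (by positivity)).le) (hfpos xs hxs).le)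
  have htsum : ∑' k : ℕ, f (((k : ℝ) + 1) / r) ≤
      ⌈r⌉₊ * ((∑' i : ℕ, f ((i : ℝ) + 1)) + f xs) := tsum_le_of_sum_le' hbound_nonneg
    (sum_apply_div_le hxs hmono hanti (fun x hx => (hfpos x hx).le) hr hsum2)
  rw [one_div_mul_eq_div, div_mul_eq_mul_div]
  exact div_le_div_of_nonneg_right htsum hr.le

/-- Let `f : (0,∞) → (0,∞)` be unimodal (nondecreasing on `(0,x*]`, nonincreasing on
`[x*,∞)`) with maximum at `x* > 0`, and let `r > 0`.  Then
`(1/r)·Σ_{k≥1} f(k/r) ≤ (⌈r⌉/r)·( Σ_{i≥1} f(i) + f(x*) )`. -/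
theorem stmt_10 (f : ℝ → ℝ) (hfpos : ∀ x, 0 < x → 0 < f x)
    (xs : ℝ) (hxs : 0 < xs)
    (hmono : MonotoneOn f (Set.Ioc 0 xs)) (hanti : AntitoneOn f (Set.Ici xs))
    (r : ℝ) (hr : 0 < r)
    (hsum1 : Summable fun k : ℕ => f (((k : ℝ) + 1) / r))
    (hsum2 : Summable fun i : ℕ => f ((i : ℝ) + 1)) :
    (1 / r) * ∑' k : ℕ, f (((k : ℝ) + 1) / r) ≤
      ((⌈r⌉₊ : ℝ) / r) * ((∑' i : ℕ, f ((i : ℝ) + 1)) + f xs) :=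
  stmt_10_general f hfpos xs hxs hmono hanti r hr hsum2
end
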